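/- Let p be a prime and k an integer not divisible by p. Then for every natural number m, A_k^m equals the 2×2 identity matrix if and only if p divides m. -/

import Mathlib

/-!
Identifying `ℝ²` with `ℂ`, the rotation `A_k` is multiplication by `ζ ^ k`, where
`ζ = exp (2πi / p)`. Since `p` is prime and `p ∤ k`, `ζ ^ k` is again a primitive `p`-th root of
unity, so `(ζ ^ k) ^ m = 1` exactly when `p ∣ m`.
-/

/-- The 2×2 real rotation matrix `A_k` by angle `2kπ/p`, the transition matrix of the
two-state QFA `M_k` for the language `MOD_p` on input symbol `a`. -/
noncomputable def Ak (p : ℕ) (k : ℤ) : Matrix (Fin 2) (Fin 2) ℝ :=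
  !![Real.cos (2 * k * Real.pi / p), -Real.sin (2 * k * Real.pi / p);
     Real.sin (2 * k * Real.pi / p),  Real.cos (2 * k * Real.pi / p)]

open Complex Real

theorem Algebra.leftMulMatrix_complex_exp_mul_I (θ : ℝ) :
    Algebra.leftMulMatrix basisOneI (exp (θ * I)) =
      !![Real.cos θ, -Real.sin θ; Real.sin θ, Real.cos θ] := by
  rw [Algebra.leftMulMatrix_complex, exp_ofReal_mul_I_re, exp_ofReal_mul_I_im]

theorem Algebra.leftMulMatrix_complex_pow_eq_one_iff (z : ℂ) (m : ℕ) :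
    Algebra.leftMulMatrix basisOneI z ^ m = 1 ↔ z ^ m = 1 := by
  rw [← map_pow, ← map_one (Algebra.leftMulMatrix basisOneI)]
  exact (Algebra.leftMulMatrix_injective basisOneI).eq_iff

theorem Ak_eq_leftMulMatrix (p : ℕ) (k : ℤ) :
    Ak p k = Algebra.leftMulMatrix basisOneI (exp (2 * π * I / p) ^ k) := by
  have hangle : (k : ℂ) * (2 * π * I / p) = ((2 * k * π / p : ℝ) : ℂ) * I := by
    push_cast; ring
  rw [← exp_int_mul, hangle, Algebra.leftMulMatrix_complex_exp_mul_I, Ak]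

theorem isPrimitiveRoot_exp_zpow_of_not_dvd {p : ℕ} (hp : p.Prime) {k : ℤ}
    (hk : ¬ (p : ℤ) ∣ k) : IsPrimitiveRoot (exp (2 * π * I / p) ^ k) p := by
  refine (isPrimitiveRoot_exp p hp.ne_zero).zpow_of_gcd_eq_one k ?_
  rw [← Int.isCoprime_iff_gcd_eq_one]
  exact ((Nat.prime_iff_prime_int.mp hp).coprime_iff_not_dvd.mpr hk).symm

/-- For `p` prime and `p ∤ k`, the power `A_k ^ m` is the identity iff `p ∣ m`. -/
theorem ak_pow_eq_one_iff (p : ℕ) (hp : p.Prime) (k : ℤ) (hk : ¬ (p : ℤ) ∣ k) (m : ℕ) :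
    Ak p k ^ m = 1 ↔ p ∣ m := by
  rw [Ak_eq_leftMulMatrix, Algebra.leftMulMatrix_complex_pow_eq_one_iff]
  exact (isPrimitiveRoot_exp_zpow_of_not_dvd hp hk).pow_eq_one_iff_dvd m
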